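/- arXiv:1606.00637 — 2 statements merged into one kernel-verified Lean document; each statement's English description precedes it below -/
import Mathlib

section
/- Let p* and p̄ be the stationary distributions of the original and perturbed Markov chains with p*_ψ ∝ exp(β Φ_ψ) and, in the perturbed chain, each Φ_ψ replaced by a value in [Φ_ψ − Δ_max, Φ_ψ + Δ_max]. If p̄_ψ ∝ exp(β Φ̄_ψ) with |Φ̄_ψ − Φ_ψ| ≤ Δ_max for all ψ, then the total variation distance d_TV(p*, p̄) = (1/2)∑_ψ |p*_ψ − p̄_ψ| is at most 1 − exp(−2β Δ_max). -/
/-!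
Both distributions are softmaxes of energies `β Φ` and `β Φ̄` that differ by at most `β Δ_max`
pointwise. Shifting the energy by at most `a` changes each Boltzmann weight and the partition
function by a factor in `[exp (-a), exp a]`, so `exp (-2 β Δ_max) p*_ψ ≤ p̄_ψ` for every `ψ`.
For probability vectors, `d_TV(p, q) = 1 - ∑_ψ min (p_ψ, q_ψ)`, and the pointwise lower bound
gives `∑_ψ min (p*_ψ, p̄_ψ) ≥ exp (-2 β Δ_max)`.
-/

open Finset Real

noncomputable def softmax {T : Type*} [Fintype T] (f : T → ℝ) (ψ : T) : ℝ :=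
  exp (f ψ) / ∑ σ, exp (f σ)

section

variable {T : Type*} [Fintype T]

lemma softmax_nonneg (f : T → ℝ) (ψ : T) : 0 ≤ softmax f ψ := by
  unfold softmax
  positivity

lemma sum_softmax [Nonempty T] (f : T → ℝ) : ∑ ψ, softmax f ψ = 1 := by
  simp only [softmax]
  rw [← sum_div, div_self (sum_pos (fun σ _ => exp_pos (f σ)) univ_nonempty).ne']

lemma sum_exp_le_exp_mul_sum_exp {f g : T → ℝ} {a : ℝ} (h : ∀ σ, f σ ≤ g σ + a) :
    ∑ σ, exp (f σ) ≤ exp a * ∑ σ, exp (g σ) := by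
  rw [mul_sum]
  refine sum_le_sum fun σ _ => ?_
  rw [← exp_add, exp_le_exp]
  linarith [h σ]

lemma exp_neg_two_mul_mul_softmax_le {f g : T → ℝ} {a : ℝ} (h : ∀ σ, |f σ - g σ| ≤ a)
    (ψ : T) : exp (-2 * a) * softmax g ψ ≤ softmax f ψ := by
  have hnum : exp (g ψ - a) ≤ exp (f ψ) := exp_le_exp.mpr (by linarith [(abs_le.mp (h ψ)).1])
  have hZ : ∑ σ, exp (f σ) ≤ exp a * ∑ σ, exp (g σ) :=
    sum_exp_le_exp_mul_sum_exp fun σ => by linarith [(abs_le.mp (h σ)).2]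
  have hZpos : 0 < ∑ σ, exp (f σ) := sum_pos (fun σ _ => exp_pos (f σ)) ⟨ψ, mem_univ ψ⟩
  calc exp (-2 * a) * softmax g ψ = exp (g ψ - a) / (exp a * ∑ σ, exp (g σ)) := by
        rw [softmax, sub_eq_add_neg, exp_add, show -2 * a = -a + -a by ring, exp_add,
          exp_neg]
        field_simp
    _ ≤ softmax f ψ := div_le_div₀ (exp_pos _).le hnum hZpos hZ

lemma half_sum_abs_sub_eq_one_sub_sum_min {p q : T → ℝ} (hp : ∑ ψ, p ψ = 1)
    (hq : ∑ ψ, q ψ = 1) :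
    (1 / 2) * ∑ ψ, |p ψ - q ψ| = 1 - ∑ ψ, min (p ψ) (q ψ) := by
  have habs : ∀ ψ, |p ψ - q ψ| = p ψ + q ψ - 2 * min (p ψ) (q ψ) := fun ψ => by
    rw [← max_sub_min_eq_abs']
    linarith [min_add_max (p ψ) (q ψ)]
  simp only [habs, sum_sub_distrib, sum_add_distrib, ← mul_sum, hp, hq]
  ring

lemma half_sum_abs_sub_le_one_sub_of_mul_le {p q : T → ℝ} {c : ℝ} (hp0 : ∀ ψ, 0 ≤ p ψ)
    (hp : ∑ ψ, p ψ = 1) (hq : ∑ ψ, q ψ = 1) (hc : c ≤ 1) (hpq : ∀ ψ, c * p ψ ≤ q ψ) :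
    (1 / 2) * ∑ ψ, |p ψ - q ψ| ≤ 1 - c := by
  have hmin : c ≤ ∑ ψ, min (p ψ) (q ψ) :=
    calc c = ∑ ψ, c * p ψ := by rw [← mul_sum, hp, mul_one]
      _ ≤ ∑ ψ, min (p ψ) (q ψ) := sum_le_sum fun ψ _ =>
          le_min (mul_le_of_le_one_left (hp0 ψ) hc) (hpq ψ)
  rw [half_sum_abs_sub_eq_one_sub_sum_min hp hq]
  linarith

end

/-- If `p*_ψ ∝ exp(β Φ_ψ)` and `p̄_ψ ∝ exp(β Φ̄_ψ)` with `|Φ̄_ψ - Φ_ψ| ≤ Δ_max` for all `ψ`,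
then the total variation distance `d_TV(p*, p̄) = (1/2) ∑_ψ |p*_ψ - p̄_ψ|` is at most
`1 - exp(-2 β Δ_max)`. -/
theorem perturbed_gibbs_tv_bound {T : Type*} [Fintype T] [Nonempty T]
    (β Δmax : ℝ) (hβ : 0 < β) (Φ Φbar : T → ℝ)
    (hΔ : ∀ ψ, |Φbar ψ - Φ ψ| ≤ Δmax)
    (p pbar : T → ℝ)
    (hp : ∀ ψ, p ψ = Real.exp (β * Φ ψ) / ∑ σ : T, Real.exp (β * Φ σ))
    (hpbar : ∀ ψ, pbar ψ = Real.exp (β * Φbar ψ) / ∑ σ : T, Real.exp (β * Φbar σ)) :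
    (1 / 2) * ∑ ψ : T, |p ψ - pbar ψ| ≤ 1 - Real.exp (-2 * β * Δmax) := by
  obtain rfl : p = softmax (fun ψ => β * Φ ψ) := funext hp
  obtain rfl : pbar = softmax (fun ψ => β * Φbar ψ) := funext hpbar
  have hΔ0 : 0 ≤ Δmax := (abs_nonneg _).trans (hΔ (Classical.arbitrary T))
  have henergy : ∀ ψ, |β * Φbar ψ - β * Φ ψ| ≤ β * Δmax := fun ψ => by
    rw [← mul_sub, abs_mul, abs_of_pos hβ]
    exact mul_le_mul_of_nonneg_left (hΔ ψ) hβ.le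
  rw [show -2 * β * Δmax = -2 * (β * Δmax) by ring]
  exact half_sum_abs_sub_le_one_sub_of_mul_le (softmax_nonneg _) (sum_softmax _) (sum_softmax _)
    (exp_le_one_iff.mpr (by nlinarith)) (exp_neg_two_mul_mul_softmax_le henergy)
end

section
/- Under the perturbation assumption |Φ̄_ψ − Φ_ψ| ≤ Δ_max for all ψ ∈ T, the difference in expected objective values satisfies |∑_ψ p*_ψ Φ_ψ − ∑_ψ p̄_ψ Φ_ψ| ≤ 2 Φ_max (1 − exp(−2β Δ_max)), where Φ_max = max_{ψ∈T} |Φ_ψ|. -/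
lemma gibbs_ratio_aux {T : Type*} [Fintype T] [Nonempty T]
    (β Δ : ℝ) (hβ : 0 ≤ β) (Φ Φbar : T → ℝ)
    (h1 : ∀ ψ, Φ ψ - Δ ≤ Φbar ψ) (h2 : ∀ ψ, Φbar ψ ≤ Φ ψ + Δ) (ψ : T) :
    Real.exp (-2 * β * Δ) * (Real.exp (β * Φ ψ) / ∑ σ : T, Real.exp (β * Φ σ))
      ≤ Real.exp (β * Φbar ψ) / ∑ σ : T, Real.exp (β * Φbar σ) := by
  have hS : 0 < ∑ σ : T, Real.exp (β * Φ σ) :=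
    Finset.sum_pos (fun σ _ => Real.exp_pos _) Finset.univ_nonempty
  have hSb : 0 < ∑ σ : T, Real.exp (β * Φbar σ) :=
    Finset.sum_pos (fun σ _ => Real.exp_pos _) Finset.univ_nonempty
  have hnum : Real.exp (-(β*Δ)) * Real.exp (β * Φ ψ) ≤ Real.exp (β * Φbar ψ) := by
    rw [← Real.exp_add]; apply Real.exp_le_exp.2; nlinarith [h1 ψ]
  have hden : (∑ σ : T, Real.exp (β * Φbar σ)) ≤
      Real.exp (β*Δ) * ∑ σ : T, Real.exp (β * Φ σ) := by
    rw [Finset.mul_sum]; apply Finset.sum_le_sum; intro σ _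
    rw [← Real.exp_add]; apply Real.exp_le_exp.2; nlinarith [h2 σ]
  rw [mul_div_assoc', div_le_div_iff₀ hS hSb]
  have hkey : Real.exp (-2*β*Δ) * Real.exp (β*Δ) = Real.exp (-(β*Δ)) := by
    rw [← Real.exp_add]; ring_nf
  have hA : (0:ℝ) < Real.exp (β * Φ ψ) := Real.exp_pos _
  have hE : (0:ℝ) < Real.exp (-2*β*Δ) := Real.exp_pos _
  calc Real.exp (-2*β*Δ) * Real.exp (β * Φ ψ) * ∑ σ : T, Real.exp (β * Φbar σ)
      ≤ Real.exp (-2*β*Δ) * Real.exp (β * Φ ψ) *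
          (Real.exp (β*Δ) * ∑ σ : T, Real.exp (β * Φ σ)) :=
        mul_le_mul_of_nonneg_left hden (mul_pos hE hA).le
    _ = (Real.exp (-(β*Δ)) * Real.exp (β * Φ ψ)) * ∑ σ : T, Real.exp (β * Φ σ) := by
        rw [← hkey]; ring
    _ ≤ Real.exp (β * Φbar ψ) * ∑ σ : T, Real.exp (β * Φ σ) :=
        mul_le_mul_of_nonneg_right hnum hS.le

/-- Under the perturbation assumption `|Φ̄_ψ - Φ_ψ| ≤ Δ_max` for all `ψ ∈ T`, the difference
in expected objective values between the Gibbs distributions `p*` and `p̄` satisfies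
`|∑_ψ p*_ψ Φ_ψ - ∑_ψ p̄_ψ Φ_ψ| ≤ 2 Φ_max (1 - exp(-2 β Δ_max))`,
where `Φ_max = max_ψ |Φ_ψ|`. -/
theorem perturbed_gibbs_objective_bound {T : Type*} [Fintype T] [Nonempty T]
    (β Δmax : ℝ) (hβ : 0 < β) (Φ Φbar : T → ℝ)
    (hΔ : ∀ ψ, |Φbar ψ - Φ ψ| ≤ Δmax)
    (p pbar : T → ℝ)
    (hp : ∀ ψ, p ψ = Real.exp (β * Φ ψ) / ∑ σ : T, Real.exp (β * Φ σ))
    (hpbar : ∀ ψ, pbar ψ = Real.exp (β * Φbar ψ) / ∑ σ : T, Real.exp (β * Φbar σ)) :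
    |∑ ψ : T, p ψ * Φ ψ - ∑ ψ : T, pbar ψ * Φ ψ| ≤
      2 * (Finset.univ.sup' Finset.univ_nonempty fun ψ => |Φ ψ|) *
        (1 - Real.exp (-2 * β * Δmax)) := by
  set M := Finset.univ.sup' Finset.univ_nonempty fun ψ => |Φ ψ| with hM
  have hMle : ∀ ψ : T, |Φ ψ| ≤ M := fun ψ => by rw [hM]; exact Finset.le_sup' (fun ψ => |Φ ψ|) (Finset.mem_univ ψ)
  have hM0 : 0 ≤ M := le_trans (abs_nonneg _) (hMle (Classical.arbitrary T))
  set e := Real.exp (-2 * β * Δmax) with he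
  have h1 : ∀ ψ, Φ ψ - Δmax ≤ Φbar ψ := fun ψ => by
    have := abs_le.1 (hΔ ψ); linarith [this.1]
  have h2 : ∀ ψ, Φbar ψ ≤ Φ ψ + Δmax := fun ψ => by
    have := abs_le.1 (hΔ ψ); linarith [this.2]
  have h1' : ∀ ψ, Φbar ψ - Δmax ≤ Φ ψ := fun ψ => by linarith [h2 ψ]
  have h2' : ∀ ψ, Φ ψ ≤ Φbar ψ + Δmax := fun ψ => by linarith [h1 ψ]
  have hub : ∀ ψ, e * p ψ ≤ pbar ψ := fun ψ => by
    rw [hp, hpbar]; exact gibbs_ratio_aux β Δmax hβ.le Φ Φbar h1 h2 ψ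
  have hlb : ∀ ψ, e * pbar ψ ≤ p ψ := fun ψ => by
    rw [hp, hpbar]; exact gibbs_ratio_aux β Δmax hβ.le Φbar Φ h1' h2' ψ
  have hp0 : ∀ ψ, 0 ≤ p ψ := fun ψ => by
    rw [hp]; positivity
  have hpbar0 : ∀ ψ, 0 ≤ pbar ψ := fun ψ => by
    rw [hpbar]; positivity
  have he1 : e ≤ 1 := by
    rw [he, Real.exp_le_one_iff]
    have hΔ0 : 0 ≤ Δmax := le_trans (abs_nonneg _) (hΔ (Classical.arbitrary T))
    nlinarith
  have hpsum : ∑ ψ : T, p ψ = 1 := by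
    rw [Finset.sum_congr rfl (fun ψ _ => hp ψ), ← Finset.sum_div, div_self]
    exact ne_of_gt (Finset.sum_pos (fun σ _ => Real.exp_pos _) Finset.univ_nonempty)
  have hpbarsum : ∑ ψ : T, pbar ψ = 1 := by
    rw [Finset.sum_congr rfl (fun ψ _ => hpbar ψ), ← Finset.sum_div, div_self]
    exact ne_of_gt (Finset.sum_pos (fun σ _ => Real.exp_pos _) Finset.univ_nonempty)
  have hptw : ∀ ψ, |p ψ * Φ ψ - pbar ψ * Φ ψ| ≤ (1 - e) * M * (p ψ + pbar ψ) := by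
    intro ψ
    rw [← sub_mul, abs_mul]
    have h3 : |p ψ - pbar ψ| ≤ (1 - e) * (p ψ + pbar ψ) := by
      rw [abs_le]
      constructor
      · nlinarith [hlb ψ, hp0 ψ, hpbar0 ψ, he1,
          mul_nonneg (sub_nonneg.2 he1) (hp0 ψ)]
      · nlinarith [hub ψ, hp0 ψ, hpbar0 ψ, he1,
          mul_nonneg (sub_nonneg.2 he1) (hpbar0 ψ)]
    calc |p ψ - pbar ψ| * |Φ ψ| ≤ ((1 - e) * (p ψ + pbar ψ)) * M := by
          apply mul_le_mul h3 (hMle ψ) (abs_nonneg _)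
          nlinarith [hp0 ψ, hpbar0 ψ]
      _ = (1 - e) * M * (p ψ + pbar ψ) := by ring
  calc |∑ ψ : T, p ψ * Φ ψ - ∑ ψ : T, pbar ψ * Φ ψ|
      = |∑ ψ : T, (p ψ * Φ ψ - pbar ψ * Φ ψ)| := by rw [Finset.sum_sub_distrib]
    _ ≤ ∑ ψ : T, |p ψ * Φ ψ - pbar ψ * Φ ψ| := Finset.abs_sum_le_sum_abs _ _
    _ ≤ ∑ ψ : T, (1 - e) * M * (p ψ + pbar ψ) :=
        Finset.sum_le_sum fun ψ _ => hptw ψ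
    _ = (1 - e) * M * 2 := by
        rw [← Finset.mul_sum, Finset.sum_add_distrib, hpsum, hpbarsum]; norm_num
    _ = 2 * M * (1 - e) := by ring
end
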